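/- Let N ≥ 5 and let v_{ij} = |ξ_{ij}⟩⟨ξ_{ij}| ∈ M_N(ℂ) be the flat magic unitary from the magic basis ξ above. Then for any indices, the product v_{i_1 j_1} v_{i_2 j_2} ⋯ v_{i_m j_m} = 0 if and only if there exists some 1 ≤ n ≤ m−1 with (i_n = i_{n+1} and j_n ≠ j_{n+1}) or (j_n = j_{n+1} and i_n ≠ i_{n+1}). -/

import Mathlib

open Complex Matrix

/-- `ω = exp(2πi/N)`. -/
noncomputable def omegaN (N : ℕ) : ℂ := Complex.exp (2 * Real.pi * Complex.I / N)

/-- The vector `ξ_{ij} ∈ ℂ^N`: coordinate `p` (for `p = 1, …, N`, encoded as `p : Fin N`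
with value `p+1`) is `ω^{1-j}/√N` if `p = 1`, `ω^{i-1}/√N` if `p = N`,
and `ω^{p(i-j)}/√N` otherwise. -/
noncomputable def xiVec (N : ℕ) (i j : ℤ) : EuclideanSpace ℂ (Fin N) :=
  WithLp.toLp 2 fun p : Fin N =>
    if (p : ℕ) = 0 then omegaN N ^ (1 - j) / (Real.sqrt N : ℂ)
    else if (p : ℕ) = N - 1 then omegaN N ^ (i - 1) / (Real.sqrt N : ℂ)
    else omegaN N ^ ((((p : ℕ) : ℤ) + 1) * (i - j)) / (Real.sqrt N : ℂ)

/-- The matrix of the rank-one projection `|ξ_{ij}⟩⟨ξ_{ij}|` onto the span of `ξ_{ij}`: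
`(v_{ij})_{pq} = ξ_{ij}(p) ⋅ conj (ξ_{ij}(q))`, so that `v_{ij} x = ⟨ξ_{ij}, x⟩ ξ_{ij}`. -/
noncomputable def flatV (N : ℕ) (i j : Fin N) : Matrix (Fin N) (Fin N) ℂ :=
  Matrix.of fun p q =>
    xiVec N (((i : ℕ) : ℤ) + 1) (((j : ℕ) : ℤ) + 1) p *
      (starRingEnd ℂ) (xiVec N (((i : ℕ) : ℤ) + 1) (((j : ℕ) : ℤ) + 1) q)

/-!
Each `v_{ij}` is the rank-one matrix `ξ_{ij} ξ_{ij}^*`, so a product of them collapses to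
`(∏ ⟨ξ_n, ξ_{n+1}⟩) • ξ_1 ξ_m^*`, which vanishes iff one of the consecutive inner products does.
Away from the first and last coordinate `ξ_{ij}` is the Fourier vector `p ↦ ω^{p(i-j)}/√N`,
and comparing with it gives, for `a = k - i` and `b = l - j`,
`⟨ξ_{ij}, ξ_{kl}⟩ = [N ∣ a - b] - (ω^a - 1)(ω^{-b} - 1)/N`.
If `N ∤ a - b` this vanishes iff `a = 0` or `b = 0`; if `N ∣ a - b` the correction term has
modulus at most `4 < N`, so the inner product does not vanish.
-/

namespace Matrix

variable {n R : Type*} [Fintype n] [DecidableEq n]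

theorem list_prod_ofFn_vecMulVec [CommSemiring R] {m : ℕ} (x y : Fin (m + 1) → n → R) :
    (List.ofFn fun k => vecMulVec (x k) (y k)).prod =
      (∏ k : Fin m, y k.castSucc ⬝ᵥ x k.succ) • vecMulVec (x 0) (y (Fin.last m)) := by
  induction m with
  | zero => simp
  | succ m ih =>
    rw [List.ofFn_succ, List.prod_cons, ih (fun k => x k.succ) (fun k => y k.succ),
      mul_smul_comm, vecMulVec_mul_vecMulVec, vecMulVec_smul, smul_smul, Fin.prod_univ_succ,
      mul_comm]
    rfl

theorem list_prod_ofFn_vecMulVec_eq_zero_iff [CommRing R] [IsDomain R] [Nonempty n] {m : ℕ}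
    (x y : Fin m → n → R) (hx : ∀ k, x k ≠ 0) (hy : ∀ k, y k ≠ 0) :
    (List.ofFn fun k => vecMulVec (x k) (y k)).prod = 0 ↔
      ∃ k : ℕ, ∃ hk : k + 1 < m, y ⟨k, k.lt_of_succ_lt hk⟩ ⬝ᵥ x ⟨k + 1, hk⟩ = 0 := by
  cases m with
  | zero => simp
  | succ m =>
    rw [list_prod_ofFn_vecMulVec, smul_eq_zero, or_iff_left (vecMulVec_ne_zero (hx 0) (hy _)),
      Finset.prod_eq_zero_iff]
    constructor
    · rintro ⟨k, -, hk⟩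
      exact ⟨k, by omega, hk⟩
    · rintro ⟨k, hk, h⟩
      exact ⟨⟨k, by omega⟩, Finset.mem_univ _, h⟩

end Matrix

section MagicBasis

variable {N : ℕ}

theorem isPrimitiveRoot_omegaN (hN : N ≠ 0) : IsPrimitiveRoot (omegaN N) N :=
  Complex.isPrimitiveRoot_exp N hN

theorem omegaN_ne_zero : omegaN N ≠ 0 :=
  Complex.exp_ne_zero _

theorem norm_omegaN_zpow (hN : N ≠ 0) (z : ℤ) : ‖omegaN N ^ z‖ = 1 := by
  rw [norm_zpow, (isPrimitiveRoot_omegaN hN).norm'_eq_one hN, _root_.one_zpow]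

theorem norm_omegaN_zpow_sub_one_le (hN : N ≠ 0) (z : ℤ) : ‖omegaN N ^ z - 1‖ ≤ 2 := by
  calc ‖omegaN N ^ z - 1‖ ≤ ‖omegaN N ^ z‖ + ‖(1 : ℂ)‖ := norm_sub_le _ _
    _ = 2 := by rw [norm_omegaN_zpow hN, norm_one]; norm_num

theorem star_omegaN_zpow (hN : N ≠ 0) (z : ℤ) : star (omegaN N ^ z) = omegaN N ^ (-z) := by
  rw [_root_.zpow_neg, Complex.inv_eq_conj (norm_omegaN_zpow hN z)]
  rfl

theorem omegaN_zpow_eq_one_iff (hN : N ≠ 0) {z : ℤ} (hz : |z| < N) :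
    omegaN N ^ z = 1 ↔ z = 0 := by
  rw [(isPrimitiveRoot_omegaN hN).zpow_eq_one_iff_dvd]
  exact ⟨fun h => Int.eq_zero_of_abs_lt_dvd h hz, fun h => h ▸ dvd_zero _⟩

theorem sum_omegaN_zpow_succ_mul (hN : N ≠ 0) (d : ℤ) :
    ∑ p : Fin N, omegaN N ^ (((p : ℕ) + 1 : ℤ) * d) = if (N : ℤ) ∣ d then (N : ℂ) else 0 := by
  have hω := isPrimitiveRoot_omegaN hN
  have hpow (p : ℕ) : omegaN N ^ ((p + 1 : ℤ) * d) = omegaN N ^ d * (omegaN N ^ d) ^ p := by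
    rw [← zpow_natCast, ← _root_.zpow_mul, ← zpow_add₀ omegaN_ne_zero]
    ring_nf
  simp_rw [hpow, ← Finset.mul_sum, Fin.sum_univ_eq_sum_range (fun p => (omegaN N ^ d) ^ p)]
  split_ifs with hd
  · rw [(hω.zpow_eq_one_iff_dvd d).2 hd]
    simp
  · have hne : omegaN N ^ d ≠ 1 := fun h => hd ((hω.zpow_eq_one_iff_dvd d).1 h)
    have hωdN : (omegaN N ^ d) ^ N = 1 := by
      rw [← zpow_natCast, ← _root_.zpow_mul, hω.zpow_eq_one_iff_dvd]
      exact dvd_mul_left _ _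
    rw [geom_sum_eq hne, hωdN, sub_self, zero_div, mul_zero]

def xiExp (N : ℕ) (I J : ℤ) (p : ℕ) : ℤ :=
  if p = 0 then 1 - J else if p = N - 1 then I - 1 else (p + 1) * (I - J)

theorem xiVec_apply (I J : ℤ) (p : Fin N) :
    xiVec N I J p = omegaN N ^ xiExp N I J p / (Real.sqrt N : ℂ) := by
  simp only [xiVec, xiExp, PiLp.toLp_apply]
  split_ifs <;> rfl

theorem xiVec_apply_ne_zero (I J : ℤ) (p : Fin N) : xiVec N I J p ≠ 0 := by
  have hN : (0 : ℝ) < N := Nat.cast_pos.2 p.pos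
  rw [xiVec_apply]
  exact div_ne_zero (zpow_ne_zero _ omegaN_ne_zero)
    (Complex.ofReal_ne_zero.2 (Real.sqrt_ne_zero'.2 hN))

theorem star_xiVec_mul_xiVec (hN : N ≠ 0) (I J K L : ℤ) (p : Fin N) :
    star (xiVec N I J p) * xiVec N K L p = omegaN N ^ (xiExp N K L p - xiExp N I J p) / N := by
  have hsqrt : (Real.sqrt N : ℂ) * (Real.sqrt N : ℂ) = N := by
    rw [← Complex.ofReal_mul, Real.mul_self_sqrt N.cast_nonneg, Complex.ofReal_natCast]
  rw [xiVec_apply, xiVec_apply, star_div₀, star_omegaN_zpow hN, Complex.star_def,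
    Complex.conj_ofReal, div_mul_div_comm, hsqrt, ← zpow_add₀ omegaN_ne_zero, neg_add_eq_sub]

/-- Coordinatewise, `conj ξ_{IJ} · ξ_{KL}` agrees with the character `p ↦ ω^{(p+1)d}`,
`d = (K - I) - (L - J)`, except at the first and last coordinate. -/
theorem sum_omegaN_zpow_xiExp_sub (hN : 2 ≤ N) (I J K L : ℤ) :
    ∑ p : Fin N, (omegaN N ^ (xiExp N K L p - xiExp N I J p) -
        omegaN N ^ (((p : ℕ) + 1 : ℤ) * ((K - I) - (L - J)))) =
      (omegaN N ^ (J - L) - omegaN N ^ ((K - I) - (L - J))) + (omegaN N ^ (K - I) - 1) := by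
  rw [Fintype.sum_eq_add ⟨0, by omega⟩ ⟨N - 1, by omega⟩ (by simp [Fin.ext_iff]; omega) ?_]
  · have h_first : xiExp N K L 0 - xiExp N I J 0 = J - L := by
      simp only [xiExp, if_pos]
      ring
    have h_last : xiExp N K L (N - 1) - xiExp N I J (N - 1) = K - I := by
      simp only [xiExp, if_neg (show N - 1 ≠ 0 by omega), if_pos]
      ring
    have h_char_last : omegaN N ^ ((((N - 1 : ℕ) : ℤ) + 1) * ((K - I) - (L - J))) = 1 := by
      rw [(isPrimitiveRoot_omegaN (by omega)).zpow_eq_one_iff_dvd,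
        show ((N - 1 : ℕ) : ℤ) + 1 = N by omega]
      exact dvd_mul_right _ _
    simp only [h_first, h_last, h_char_last, Nat.cast_zero, zero_add, one_mul]
  · rintro p ⟨hp_first, hp_last⟩
    rw [sub_eq_zero]
    congr 1
    simp only [xiExp, if_neg (Fin.val_ne_iff.2 hp_first), if_neg (Fin.val_ne_iff.2 hp_last)]
    ring

theorem dotProduct_star_xiVec (hN : 2 ≤ N) (I J K L : ℤ) :
    star ⇑(xiVec N I J) ⬝ᵥ ⇑(xiVec N K L) =
      (if (N : ℤ) ∣ (K - I) - (L - J) then 1 else 0) -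
        (omegaN N ^ (K - I) - 1) * (omegaN N ^ (J - L) - 1) / N := by
  have hN0 : N ≠ 0 := by omega
  have hω_split : omegaN N ^ ((K - I) - (L - J)) = omegaN N ^ (K - I) * omegaN N ^ (J - L) := by
    rw [← zpow_add₀ omegaN_ne_zero]
    ring_nf
  calc star ⇑(xiVec N I J) ⬝ᵥ ⇑(xiVec N K L)
      = ∑ p : Fin N, omegaN N ^ (xiExp N K L p - xiExp N I J p) / N := by
        simp only [dotProduct, Pi.star_apply, star_xiVec_mul_xiVec hN0]
    _ = (∑ p : Fin N, omegaN N ^ (((p : ℕ) + 1 : ℤ) * ((K - I) - (L - J))) +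
          ∑ p : Fin N, (omegaN N ^ (xiExp N K L p - xiExp N I J p) -
            omegaN N ^ (((p : ℕ) + 1 : ℤ) * ((K - I) - (L - J))))) / N := by
        rw [← Finset.sum_add_distrib, Finset.sum_div]
        simp only [add_sub_cancel]
    _ = _ := by
        rw [sum_omegaN_zpow_succ_mul hN0, sum_omegaN_zpow_xiExp_sub hN, hω_split]
        split_ifs <;> field_simp <;> ring

theorem dotProduct_star_xiVec_eq_zero_iff (hN : 5 ≤ N) {I J K L : ℤ} (hIK : |K - I| < N)
    (hJL : |L - J| < N) :
    star ⇑(xiVec N I J) ⬝ᵥ ⇑(xiVec N K L) = 0 ↔ (I = K ∧ J ≠ L) ∨ (J = L ∧ I ≠ K) := by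
  have hN0 : N ≠ 0 := by omega
  have hNC : (N : ℂ) ≠ 0 := Nat.cast_ne_zero.2 hN0
  have hLJ : |J - L| < N := by rwa [abs_sub_comm]
  rw [dotProduct_star_xiVec (by omega)]
  split_ifs with hd
  · have h_small : ‖(omegaN N ^ (K - I) - 1) * (omegaN N ^ (J - L) - 1)‖ < N := by
      rw [norm_mul]
      have := norm_omegaN_zpow_sub_one_le hN0 (K - I)
      have := norm_omegaN_zpow_sub_one_le hN0 (J - L)
      have : (5 : ℝ) ≤ N := by exact_mod_cast hN
      nlinarith [norm_nonneg (omegaN N ^ (K - I) - 1), norm_nonneg (omegaN N ^ (J - L) - 1)]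
    have h_ne : (1 : ℂ) - (omegaN N ^ (K - I) - 1) * (omegaN N ^ (J - L) - 1) / N ≠ 0 := by
      intro h
      rw [sub_eq_zero, eq_div_iff hNC, one_mul] at h
      rw [← h, Complex.norm_natCast] at h_small
      exact lt_irrefl _ h_small
    have hIK_JL : I = K → J = L := by
      rintro rfl
      have := Int.eq_zero_of_abs_lt_dvd (by simpa using hd) hLJ
      omega
    have hJL_IK : J = L → I = K := by
      rintro rfl
      have := Int.eq_zero_of_abs_lt_dvd (by simpa using hd) hIK
      omega
    simp only [h_ne, false_iff]
    tauto
  · rw [zero_sub, neg_eq_zero, div_eq_zero_iff, or_iff_left hNC, mul_eq_zero, sub_eq_zero,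
      sub_eq_zero, omegaN_zpow_eq_one_iff hN0 hIK, omegaN_zpow_eq_one_iff hN0 hLJ]
    have h_not_both : ¬(I = K ∧ J = L) := by
      rintro ⟨rfl, rfl⟩
      simp at hd
    omega

theorem flatV_eq_vecMulVec (i j : Fin N) :
    flatV N i j = vecMulVec ⇑(xiVec N ((i : ℕ) + 1) ((j : ℕ) + 1))
      (star ⇑(xiVec N ((i : ℕ) + 1) ((j : ℕ) + 1))) :=
  rfl

end MagicBasis

theorem flatV_free_orbitals (N : ℕ) (hN : 5 ≤ N) (m : ℕ) (i j : Fin m → Fin N) :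
    (List.ofFn fun n : Fin m => flatV N (i n) (j n)).prod = 0 ↔
      ∃ n : ℕ, ∃ hn : n + 1 < m,
        (i ⟨n, Nat.lt_of_succ_lt hn⟩ = i ⟨n + 1, hn⟩ ∧
            j ⟨n, Nat.lt_of_succ_lt hn⟩ ≠ j ⟨n + 1, hn⟩) ∨
        (j ⟨n, Nat.lt_of_succ_lt hn⟩ = j ⟨n + 1, hn⟩ ∧
            i ⟨n, Nat.lt_of_succ_lt hn⟩ ≠ i ⟨n + 1, hn⟩) := by
  have : Nonempty (Fin N) := ⟨⟨0, by omega⟩⟩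
  set ξ : Fin m → Fin N → ℂ := fun n => ⇑(xiVec N ((i n : ℕ) + 1) ((j n : ℕ) + 1))
  have hξ (n : Fin m) : ξ n ≠ 0 :=
    Function.ne_iff.2 ⟨Classical.arbitrary _, xiVec_apply_ne_zero _ _ _⟩
  simp only [flatV_eq_vecMulVec]
  rw [list_prod_ofFn_vecMulVec_eq_zero_iff ξ (fun n => star (ξ n)) hξ
    (fun n => star_ne_zero.2 (hξ n))]
  refine exists_congr fun n => exists_congr fun hn => ?_
  rw [dotProduct_star_xiVec_eq_zero_iff hN (by rw [abs_lt]; omega) (by rw [abs_lt]; omega)]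
  simp only [ne_eq, add_left_inj, Nat.cast_inj, Fin.val_inj]
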